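/- (Inclusion–exclusion count of set tuples with empty common intersection, equation (26)) Let L ≥ 1 and n ≥ 0 be integers and let k_1, …, k_L be integers with 0 ≤ k_j ≤ n for every j. Then the number of L-tuples (V_1, …, V_L) of subsets of Fin n with |V_j| = k_j for every j and ⋂_{j=1}^{L} V_j = ∅ equals Σ_{l=0}^{min_j k_j} (−1)^l C(n, l) ∏_{j=1}^{L} C(n−l, k_j−l), where C(a,b) denotes the binomial coefficient. -/

import Mathlib

/-!
Since `∑_{S ⊆ T} (-1)^|S|` is `1` for `T = ∅` and `0` otherwise, summing it over the tuples with
`T = ⋂ V_j` counts those with empty intersection as `∑_S (-1)^|S| N(S)`, where `N(S)` is the number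
of tuples with `S ⊆ V_j` for all `j`. Choosing each `V_j \ S` inside `Sᶜ` gives
`N(S) = ∏_j C(n - |S|, k_j - |S|)` when `|S| ≤ min k`, and `N(S) = 0` otherwise; `N(S)` depends
only on `|S|`, which takes the value `l` for `C(n, l)` sets `S`.
-/

open scoped Classical

/-- Minimum of `k j` over the (nonempty) index type `Fin L`. -/
def minOver {L : ℕ} (hL : 0 < L) (k : Fin L → ℕ) : ℕ :=
  Finset.univ.inf' ⟨⟨0, hL⟩, Finset.mem_univ _⟩ k

open Finset

namespace Finset

variable {α β ι : Type*} [Fintype α] [DecidableEq α]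

theorem card_filter_eq_empty_eq_sum_neg_one_pow (A : Finset β) (f : β → Finset α) :
    (#{b ∈ A | f b = ∅} : ℤ) = ∑ S : Finset α, (-1 : ℤ) ^ #S * #{b ∈ A | S ⊆ f b} := by
  calc (#{b ∈ A | f b = ∅} : ℤ)
      = ∑ b ∈ A, ∑ S ∈ (f b).powerset, (-1 : ℤ) ^ #S := by
        simp [sum_powerset_neg_one_pow_card]
    _ = ∑ b ∈ A, ∑ S : Finset α, if S ⊆ f b then (-1 : ℤ) ^ #S else 0 := by
        simp only [sum_ite, sum_const_zero, add_zero, filter_subset_univ]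
    _ = ∑ S : Finset α, (-1 : ℤ) ^ #S * #{b ∈ A | S ⊆ f b} := by
        rw [sum_comm]
        simp [sum_ite, mul_comm]

theorem card_filter_card_eq_and_superset (S : Finset α) {m : ℕ} (hS : #S ≤ m) :
    #{W : Finset α | #W = m ∧ S ⊆ W} = (Fintype.card α - #S).choose (m - #S) := by
  rw [← card_compl, ← card_powersetCard]
  refine card_nbij' (· \ S) (· ∪ S) ?_ ?_ ?_ ?_
  · intro W hW
    simp only [mem_coe, mem_filter, mem_univ, true_and] at hW
    simp [card_sdiff_of_subset hW.2, hW.1, subset_iff]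
  · intro T hT
    simp only [mem_coe, mem_powersetCard, subset_compl_iff_disjoint_right] at hT
    simp [card_union_of_disjoint hT.1, hT.2, hS]
  · intro W hW
    simp only [mem_coe, mem_filter, mem_univ, true_and] at hW
    exact sdiff_union_of_subset hW.2
  · intro T hT
    simp only [mem_coe, mem_powersetCard, subset_compl_iff_disjoint_right] at hT
    exact union_sdiff_cancel_right hT.1

theorem card_filter_card_eq_and_superset_of_lt (S : Finset α) {m : ℕ} (hS : m < #S) :
    #{W : Finset α | #W = m ∧ S ⊆ W} = 0 := by
  rw [card_eq_zero, filter_eq_empty_iff]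
  rintro W - ⟨rfl, hSW⟩
  exact (card_le_card hSW).not_gt hS

theorem card_filter_forall_apply [Fintype ι] [DecidableEq ι] {κ : ι → Type*}
    [∀ i, Fintype (κ i)] (P : ∀ i, κ i → Prop)
    [∀ i, DecidablePred (P i)] :
    #{f : ∀ i, κ i | ∀ i, P i (f i)} = ∏ i, #{b | P i b} := by
  rw [← Fintype.card_piFinset]
  congr 1
  ext f
  simp [Fintype.mem_piFinset]

variable [Fintype ι] [DecidableEq ι]

theorem card_filter_card_eq_and_subset_inf (k : ι → ℕ) (S : Finset α)
    [DecidablePred fun V : ι → Finset α => ∀ j, #(V j) = k j] :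
    #{V ∈ ({V : ι → Finset α | ∀ j, #(V j) = k j} : Finset _) | S ⊆ univ.inf V}
      = if ∀ j, #S ≤ k j then ∏ j, (Fintype.card α - #S).choose (k j - #S) else 0 := by
  calc #{V ∈ ({V : ι → Finset α | ∀ j, #(V j) = k j} : Finset _) | S ⊆ univ.inf V}
      = #{V : ι → Finset α | ∀ j, #(V j) = k j ∧ S ⊆ V j} := by
        congr 1
        ext V
        simp [forall_and]
    _ = ∏ j, #{W : Finset α | #W = k j ∧ S ⊆ W} :=
        card_filter_forall_apply fun j W => #W = k j ∧ S ⊆ W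
    _ = _ := by
        split_ifs with hS
        · exact prod_congr rfl fun j _ => card_filter_card_eq_and_superset S (hS j)
        · obtain ⟨j, hj⟩ := not_forall.1 hS
          exact prod_eq_zero (mem_univ j) (card_filter_card_eq_and_superset_of_lt S (not_le.1 hj))

end Finset

theorem le_minOver_iff {L : ℕ} (hL : 0 < L) (k : Fin L → ℕ) {l : ℕ} :
    l ≤ minOver hL k ↔ ∀ j, l ≤ k j :=
  (Finset.le_inf'_iff ⟨⟨0, hL⟩, mem_univ _⟩ k).trans (by simp)

/-- inclusion–exclusion count of set tuples with empty common intersection: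
the number of `L`-tuples `(V 1, …, V L)` of subsets of `Fin n` with `|V j| = k j` for every
`j` and `⋂ j, V j = ∅` equals `Σ_{l=0}^{min_j k_j} (-1)^l C(n,l) ∏_j C(n-l, k_j-l)`. -/
theorem stmt9 (n L : ℕ) (hL : 0 < L) (k : Fin L → ℕ) (hk : ∀ j, k j ≤ n) :
    ((Finset.univ.filter (fun V : Fin L → Finset (Fin n) =>
          (∀ j, (V j).card = k j) ∧ Finset.univ.inf V = ∅)).card : ℤ)
      = ∑ l ∈ Finset.range (minOver hL k + 1),
          (-1 : ℤ) ^ l * (n.choose l : ℤ) * ∏ j, ((n - l).choose (k j - l) : ℤ) := by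
  let term (l : ℕ) : ℤ :=
    if l ≤ minOver hL k then (-1) ^ l * ∏ j, ((n - l).choose (k j - l) : ℤ) else 0
  have hterm (S : Finset (Fin n)) :
      (-1 : ℤ) ^ #S * #{V ∈ ({V : Fin L → Finset (Fin n) | ∀ j, #(V j) = k j} : Finset _) |
        S ⊆ univ.inf V} = term #S := by
    rw [card_filter_card_eq_and_subset_inf, Fintype.card_fin]
    simp only [term, le_minOver_iff]
    split_ifs <;> push_cast <;> ring
  have hmin_le : minOver hL k ≤ n := ((le_minOver_iff hL k).1 le_rfl ⟨0, hL⟩).trans (hk _)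
  rw [← filter_filter, card_filter_eq_empty_eq_sum_neg_one_pow]
  simp_rw [hterm, ← powerset_univ]
  rw [sum_powerset_apply_card term, card_univ, Fintype.card_fin,
    ← sum_subset (range_subset_range.2 (Nat.succ_le_succ hmin_le))]
  · refine sum_congr rfl fun l hl => ?_
    dsimp only [term]
    rw [nsmul_eq_mul, if_pos (Nat.lt_succ_iff.1 (mem_range.1 hl))]
    ring
  · intro l _ hl
    dsimp only [term]
    rw [if_neg (not_le.2 (by simpa [Nat.lt_succ_iff] using hl)), smul_zero]
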